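/- arXiv:2304.07122 — 3 statements merged into one kernel-verified Lean document; each statement's English description precedes it below -/
import Mathlib

section
/- Let A have spectral radius less than 1, P∞ = dlyap(A, Vw), and let V_k satisfy V_{k+1} = A V_k Aᵀ + Vw with V_N ⪯ P∞ given. Then the tail sum S_N = Σ_{k=N}^{∞} (P∞ − V_k) converges and equals dlyap(A, P∞) − dlyap(A, V_N). -/
open Matrix

/-- `A` has spectral radius strictly less than one. -/
def SpectralRadiusLtOne {n : Type*} [Fintype n] [DecidableEq n] (A : Matrix n n ℝ) : Prop :=
  ∀ z ∈ spectrum ℂ (A.map (algebraMap ℝ ℂ)), ‖z‖ < 1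

/-!
With `E = X - Y` the two Lyapunov equations give `E - A E Aᵀ = P∞ - V_N`, while subtracting the
recursion from the fixed-point equation gives `P∞ - V_{N+j} = Aʲ (P∞ - V_N) (Aʲ)ᵀ`. Hence the
`j`-th term of the series is `T j - T (j + 1)` with `T j = Aʲ E (Aʲ)ᵀ`, and the series telescopes
to `T 0 = E`. By Gelfand's formula `‖Aʲ‖ ≤ rʲ` eventually for some `r < 1`, so `T` is summable,
which makes the telescoping sum unconditional.
-/

open Filter

theorem hasSum_sub_succ {G : Type*} [AddCommGroup G] [TopologicalSpace G]
    [IsTopologicalAddGroup G] {T : ℕ → G} (hT : Summable T) :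
    HasSum (fun j => T j - T (j + 1)) (T 0) := by
  simpa using hT.hasSum.sub ((hasSum_nat_add_iff' 1).mpr hT.hasSum)

theorem spectrum.eventually_norm_pow_le_of_spectralRadius_lt {A : Type*} [NormedRing A]
    [NormedAlgebra ℂ A] [CompleteSpace A] {a : A} {r : NNReal} (h : spectralRadius ℂ a < r) :
    ∀ᶠ j : ℕ in atTop, ‖a ^ j‖ ≤ r ^ j := by
  filter_upwards [(pow_nnnorm_pow_one_div_tendsto_nhds_spectralRadius a).eventually_lt_const h,
    eventually_ge_atTop 1] with j hj hj1
  have hj0 : (j : ℝ) ≠ 0 := by positivity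
  have hpow := ENNReal.rpow_le_rpow hj.le (Nat.cast_nonneg j)
  rw [← ENNReal.rpow_mul, one_div, inv_mul_cancel₀ hj0, ENNReal.rpow_one, ENNReal.rpow_natCast,
    ← ENNReal.coe_pow, ENNReal.coe_le_coe] at hpow
  exact_mod_cast hpow

namespace Matrix

section Lyapunov

variable {n R : Type*} [Fintype n] [DecidableEq n] [CommRing R]

theorem pow_succ_mul_mul_transpose_pow_succ (A M : Matrix n n R) (j : ℕ) :
    A ^ (j + 1) * M * (A ^ (j + 1))ᵀ = A ^ j * (A * M * Aᵀ) * (A ^ j)ᵀ := by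
  simp only [pow_succ, transpose_mul, mul_assoc]

theorem pow_succ_mul_mul_transpose_pow_succ' (A M : Matrix n n R) (j : ℕ) :
    A ^ (j + 1) * M * (A ^ (j + 1))ᵀ = A * (A ^ j * M * (A ^ j)ᵀ) * Aᵀ := by
  simp only [pow_succ', transpose_mul, mul_assoc]

theorem fixedPoint_sub_eq_pow_mul_mul_transpose_pow {A W P : Matrix n n R} {V : ℕ → Matrix n n R}
    {N : ℕ} (hP : A * P * Aᵀ + W = P) (hV : ∀ k, N ≤ k → V (k + 1) = A * V k * Aᵀ + W) (j : ℕ) :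
    P - V (N + j) = A ^ j * (P - V N) * (A ^ j)ᵀ := by
  induction j with
  | zero => simp
  | succ j ih =>
    calc P - V (N + (j + 1)) = A * P * Aᵀ + W - (A * V (N + j) * Aᵀ + W) := by
          rw [hP, ← hV _ (Nat.le_add_right N j), Nat.add_assoc]
      _ = A * (P - V (N + j)) * Aᵀ := by rw [mul_sub, sub_mul, add_sub_add_right_eq_sub]
      _ = A ^ (j + 1) * (P - V N) * (A ^ (j + 1))ᵀ := by
          rw [ih, pow_succ_mul_mul_transpose_pow_succ']

end Lyapunov

section Summable

variable {n : Type*} [Fintype n] [DecidableEq n]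

attribute [local instance] frobeniusNormedRing frobeniusNormedAlgebra

theorem spectralRadius_lt_one_of_spectralRadiusLtOne {A : Matrix n n ℝ}
    (hA : SpectralRadiusLtOne A) : spectralRadius ℂ (A.map (algebraMap ℝ ℂ)) < 1 := by
  rcases (spectrum ℂ (A.map (algebraMap ℝ ℂ))).eq_empty_or_nonempty with hempty | hne
  · rw [spectralRadius, hempty]
    simp
  · exact spectrum.spectralRadius_lt_of_forall_lt_of_nonempty hne fun z hz => hA z hz

theorem exists_eventually_norm_pow_le {A : Matrix n n ℝ} (hA : SpectralRadiusLtOne A) :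
    ∃ r : NNReal, r < 1 ∧ ∀ᶠ j : ℕ in atTop, ‖A ^ j‖ ≤ r ^ j := by
  have : CompleteSpace (Matrix n n ℂ) := FiniteDimensional.complete ℂ _
  obtain ⟨r, hlt, hr1⟩ :=
    ENNReal.lt_iff_exists_nnreal_btwn.mp (spectralRadius_lt_one_of_spectralRadiusLtOne hA)
  refine ⟨r, by exact_mod_cast hr1, ?_⟩
  filter_upwards [spectrum.eventually_norm_pow_le_of_spectralRadius_lt hlt] with j hj
  rwa [← RingHom.mapMatrix_apply, ← map_pow, RingHom.mapMatrix_apply,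
    frobenius_norm_map_eq _ _ fun x => by simp] at hj

theorem summable_pow_mul_mul_transpose_pow {A : Matrix n n ℝ} (hA : SpectralRadiusLtOne A)
    (M : Matrix n n ℝ) : Summable fun j : ℕ => A ^ j * M * (A ^ j)ᵀ := by
  obtain ⟨r, hr1, hr⟩ := exists_eventually_norm_pow_le hA
  have hr2 : (r : ℝ) ^ 2 < 1 := pow_lt_one₀ r.coe_nonneg hr1 two_ne_zero
  refine Summable.of_norm_bounded_eventually_nat
    ((summable_geometric_of_lt_one (by positivity) hr2).mul_left ‖M‖) ?_
  filter_upwards [hr] with j hj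
  calc ‖A ^ j * M * (A ^ j)ᵀ‖ ≤ ‖A ^ j‖ * ‖M‖ * ‖A ^ j‖ := by
        simpa only [frobenius_norm_transpose] using
          norm_mul₃_le (a := A ^ j) (b := M) (c := (A ^ j)ᵀ)
    _ ≤ r ^ j * ‖M‖ * r ^ j := by gcongr
    _ = ‖M‖ * ((r : ℝ) ^ 2) ^ j := by ring

end Summable

end Matrix

theorem terminal_cost_tail_sum_general
    {n : Type*} [Fintype n] [DecidableEq n]
    (A Vw Pinf : Matrix n n ℝ)
    (hspec : SpectralRadiusLtOne A)
    (hPinf : A * Pinf * Aᵀ + Vw = Pinf)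
    (N : ℕ) (V : ℕ → Matrix n n ℝ)
    (hrec : ∀ k, N ≤ k → V (k + 1) = A * V k * Aᵀ + Vw)
    (X Y : Matrix n n ℝ)
    (hX : A * X * Aᵀ + Pinf = X)      -- X = dlyap(A, P∞)
    (hY : A * Y * Aᵀ + V N = Y) :     -- Y = dlyap(A, V_N)
    HasSum (fun j : ℕ => Pinf - V (N + j)) (X - Y) := by
  have hdiff : Pinf - V N = X - Y - A * (X - Y) * Aᵀ := by
    calc Pinf - V N = A * X * Aᵀ + Pinf - (A * Y * Aᵀ + V N) - A * (X - Y) * Aᵀ := by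
          rw [mul_sub, sub_mul]; abel
      _ = X - Y - A * (X - Y) * Aᵀ := by rw [hX, hY]
  have hterm : ∀ j : ℕ, Pinf - V (N + j) =
      A ^ j * (X - Y) * (A ^ j)ᵀ - A ^ (j + 1) * (X - Y) * (A ^ (j + 1))ᵀ := fun j => by
    rw [fixedPoint_sub_eq_pow_mul_mul_transpose_pow hPinf hrec, hdiff, mul_sub, sub_mul,
      pow_succ_mul_mul_transpose_pow_succ]
  simpa only [hterm, pow_zero, one_mul, transpose_one, mul_one] using
    hasSum_sub_succ (summable_pow_mul_mul_transpose_pow hspec (X - Y))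

/-- Tail sum of the deviation of the variance recursion from the steady state:
with `P∞ = dlyap(A, Vw)`, `V_{k+1} = A V_k Aᵀ + Vw` for `k ≥ N` and `V_N ⪯ P∞`, the
series `S_N = Σ_{k=N}^∞ (P∞ − V_k)` converges and equals
`dlyap(A, P∞) − dlyap(A, V_N)`. -/
theorem terminal_cost_tail_sum
    {n : Type*} [Fintype n] [DecidableEq n]
    (A Vw Pinf : Matrix n n ℝ)
    (hspec : SpectralRadiusLtOne A) (hVw : Vw.PosSemidef)
    (hPinf : A * Pinf * Aᵀ + Vw = Pinf)
    (N : ℕ) (V : ℕ → Matrix n n ℝ)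
    (hrec : ∀ k, N ≤ k → V (k + 1) = A * V k * Aᵀ + Vw)
    (hVN : (Pinf - V N).PosSemidef)
    (X Y : Matrix n n ℝ)
    (hX : A * X * Aᵀ + Pinf = X)      -- X = dlyap(A, P∞)
    (hY : A * Y * Aᵀ + V N = Y) :     -- Y = dlyap(A, V_N)
    HasSum (fun j : ℕ => Pinf - V (N + j)) (X - Y) :=
  terminal_cost_tail_sum_general A Vw Pinf hspec hPinf N V hrec X Y hX hY
end

section
/- (Closed-loop constraint satisfaction, Theorem 2 core step) Suppose cᵀz ≤ d − sqrt(cᵀVc)·Φ⁻¹(ρ) with ρ ∈ [1/2, 1), V ⪰ 0, and e ~ N(0, V'), where cᵀV'c ≤ cᵀVc. Then P(cᵀ(z + e) ≤ d) ≥ ρ. -/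
/-! The constraint function `cᵀx` of the true state is `cᵀz` plus a centred Gaussian of variance
`v' = cᵀV'c`, which has the law of `√v' · N(0,1)`. Because `Φ⁻¹(ρ) ≥ 0` for `ρ ≥ 1/2`, the margin
`√(cᵀVc) · Φ⁻¹(ρ)` of the tightened constraint dominates `√v' · Φ⁻¹(ρ)`, so the event
`cᵀx ≤ d` contains the event `N(0,1) ≤ Φ⁻¹(ρ)`, of probability `ρ`. -/

open MeasureTheory ProbabilityTheory Matrix

/-- The CDF of the standard normal distribution. -/
noncomputable def stdNormalCDF : ℝ → ℝ := fun x => ProbabilityTheory.cdf (gaussianReal 0 1) x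

/-- The quantile function (inverse CDF) of the standard normal distribution. -/
noncomputable def stdNormalCDFInv : ℝ → ℝ := Function.invFun stdNormalCDF

open scoped NNReal
open Set

namespace ProbabilityTheory

variable {μ : Measure ℝ} [IsProbabilityMeasure μ]

lemma continuous_cdf [NullSingletonClass μ] : Continuous (cdf μ) := by
  refine continuous_iff_continuousAt.2 fun x ↦ continuousAt_iff_continuous_left_right.2
    ⟨?_, (cdf μ).right_continuous x⟩
  rw [← continuousWithinAt_Iio_iff_Iic, (cdf μ).mono.continuousWithinAt_Iio_iff_leftLim_eq]
  have h := (cdf μ).measure_singleton x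
  rw [measure_cdf, measure_singleton, eq_comm, ENNReal.ofReal_eq_zero, sub_nonpos] at h
  exact le_antisymm ((cdf μ).mono.leftLim_le le_rfl) h

lemma strictMono_cdf (h : volume ≪ μ) : StrictMono (cdf μ) := by
  intro a b hab
  have hpos : 0 < (cdf μ).measure (Ioc a b) := by
    rw [measure_cdf, pos_iff_ne_zero]
    exact fun h0 ↦ hab.not_ge <| by simpa using h h0
  rw [(cdf μ).measure_Ioc, ENNReal.ofReal_pos, sub_pos] at hpos
  exact hpos

lemma cdf_zero_of_map_neg [NullSingletonClass μ] (hμ : μ.map Neg.neg = μ) : cdf μ 0 = 2⁻¹ := by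
  have hsymm : μ.real (Iic 0) = μ.real (Ioi 0) := by
    rw [← hμ, map_measureReal_apply measurable_neg measurableSet_Iic, hμ,
      measureReal_congr Ioi_ae_eq_Ici]
    simp
  have htot : μ.real (Iic 0) + μ.real (Ioi 0) = 1 := by
    rw [← compl_Iic, probReal_add_probReal_compl measurableSet_Iic]
  rw [cdf_eq_real]
  linarith

lemma cdf_invFun_cdf [NullSingletonClass μ] {p : ℝ} (hp : p ∈ Ioo 0 1) :
    cdf μ (Function.invFun (cdf μ) p) = p :=
  Function.invFun_eq <| mem_range_of_exists_le_of_exists_ge continuous_cdf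
    ((tendsto_cdf_atBot μ).eventually_le_const hp.1).exists
    ((tendsto_cdf_atTop μ).eventually_const_le hp.2).exists

lemma gaussianReal_map_sqrt_mul (v : ℝ≥0) :
    (gaussianReal 0 1).map (√v * ·) = gaussianReal 0 v := by
  rw [gaussianReal_map_const_mul, mul_zero, mul_one]
  congr
  exact Real.sq_sqrt v.2

end ProbabilityTheory

lemma Real.sqrt_coe_toNNReal (x : ℝ) : √(x.toNNReal : ℝ) = √x := by
  rw [Real.sqrt, Real.sqrt, Real.toNNReal_coe]

instance : NullSingletonClass (gaussianReal 0 1) := nullSingletonClass_gaussianReal one_ne_zero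

lemma stdNormalCDF_stdNormalCDFInv {ρ : ℝ} (hρ : ρ ∈ Ioo 0 1) :
    stdNormalCDF (stdNormalCDFInv ρ) = ρ :=
  cdf_invFun_cdf hρ

lemma stdNormalCDF_zero : stdNormalCDF 0 = 2⁻¹ :=
  cdf_zero_of_map_neg (by simpa using gaussianReal_map_neg (μ := 0) (v := 1))

lemma stdNormalCDF_strictMono : StrictMono stdNormalCDF :=
  strictMono_cdf (gaussianReal_absolutelyContinuous' 0 one_ne_zero)

lemma stdNormalCDFInv_nonneg {ρ : ℝ} (hρ : ρ ∈ Ico (1 / 2) 1) : 0 ≤ stdNormalCDFInv ρ := by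
  by_contra! hneg
  have := stdNormalCDF_strictMono hneg
  rw [stdNormalCDF_zero, stdNormalCDF_stdNormalCDFInv ⟨by linarith [hρ.1], hρ.2⟩] at this
  linarith [hρ.1]

lemma stdNormalCDF_le_gaussianReal_Iic {v : ℝ≥0} {q t : ℝ} (h : √v * q ≤ t) :
    stdNormalCDF q ≤ (gaussianReal 0 v).real (Iic t) := by
  rw [stdNormalCDF, cdf_eq_real, ← gaussianReal_map_sqrt_mul v,
    map_measureReal_apply (by fun_prop) measurableSet_Iic]
  refine measureReal_mono (fun x (hx : x ≤ q) ↦ ?_) (measure_ne_top (gaussianReal 0 1) _)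
  exact (mul_le_mul_of_nonneg_left hx (Real.sqrt_nonneg v)).trans h

theorem closed_loop_constraint_satisfaction_general
    {n : Type*} [Fintype n]
    {Ω : Type*} [MeasurableSpace Ω] (μ : Measure Ω) [IsProbabilityMeasure μ]
    (V V' : Matrix n n ℝ)
    (c z : n → ℝ) (d ρ : ℝ) (hρ : ρ ∈ Set.Ico (1 / 2 : ℝ) 1)
    (hvar : c ⬝ᵥ V' *ᵥ c ≤ c ⬝ᵥ V *ᵥ c)
    (e : Ω → n → ℝ)
    (hlaw : Measure.map (fun ω => c ⬝ᵥ e ω) μ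
      = gaussianReal 0 (Real.toNNReal (c ⬝ᵥ V' *ᵥ c)))
    (hz : c ⬝ᵥ z ≤ d - Real.sqrt (c ⬝ᵥ V *ᵥ c) * stdNormalCDFInv ρ) :
    ρ ≤ (μ {ω | c ⬝ᵥ (z + e ω) ≤ d}).toReal := by
  have hevent : {ω | c ⬝ᵥ (z + e ω) ≤ d} = (fun ω ↦ c ⬝ᵥ e ω) ⁻¹' Iic (d - c ⬝ᵥ z) := by
    ext ω
    simp only [dotProduct_add, mem_preimage, mem_Iic, mem_ofPred_eq, le_sub_iff_add_le']
  have hmeas : AEMeasurable (fun ω ↦ c ⬝ᵥ e ω) μ :=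
    aemeasurable_of_map_neZero (by rw [hlaw]; infer_instance)
  have hmargin : √(c ⬝ᵥ V' *ᵥ c).toNNReal * stdNormalCDFInv ρ ≤ d - c ⬝ᵥ z := by
    rw [Real.sqrt_coe_toNNReal]
    calc √(c ⬝ᵥ V' *ᵥ c) * stdNormalCDFInv ρ ≤ √(c ⬝ᵥ V *ᵥ c) * stdNormalCDFInv ρ :=
          mul_le_mul_of_nonneg_right (Real.sqrt_le_sqrt hvar) (stdNormalCDFInv_nonneg hρ)
      _ ≤ d - c ⬝ᵥ z := by linarith
  calc ρ = stdNormalCDF (stdNormalCDFInv ρ) :=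
        (stdNormalCDF_stdNormalCDFInv ⟨by linarith [hρ.1], hρ.2⟩).symm
    _ ≤ (μ {ω | c ⬝ᵥ (z + e ω) ≤ d}).toReal := by
      rw [← measureReal_def, hevent,
        ← map_measureReal_apply_of_aemeasurable hmeas measurableSet_Iic, hlaw]
      exact stdNormalCDF_le_gaussianReal_Iic hmargin

/-- Theorem 2, core step: if the nominal state satisfies the tightened constraint
`cᵀz ≤ d − sqrt(cᵀVc)·Φ⁻¹(ρ)` with `ρ ∈ [1/2, 1)`, and `e` is a zero-mean Gaussian
with covariance `V'` such that `cᵀV'c ≤ cᵀVc`, then `P(cᵀ(z + e) ≤ d) ≥ ρ`. -/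
theorem closed_loop_constraint_satisfaction
    {n : Type*} [Fintype n]
    {Ω : Type*} [MeasurableSpace Ω] (μ : Measure Ω) [IsProbabilityMeasure μ]
    (V V' : Matrix n n ℝ) (hV : V.PosSemidef) (hV' : V'.PosSemidef)
    (c z : n → ℝ) (d ρ : ℝ) (hρ : ρ ∈ Set.Ico (1 / 2 : ℝ) 1)
    (hvar : c ⬝ᵥ V' *ᵥ c ≤ c ⬝ᵥ V *ᵥ c)
    (e : Ω → n → ℝ)
    (hlaw : Measure.map (fun ω => c ⬝ᵥ e ω) μ
      = gaussianReal 0 (Real.toNNReal (c ⬝ᵥ V' *ᵥ c)))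
    (hz : c ⬝ᵥ z ≤ d - Real.sqrt (c ⬝ᵥ V *ᵥ c) * stdNormalCDFInv ρ) :
    ρ ≤ (μ {ω | c ⬝ᵥ (z + e ω) ≤ d}).toReal :=
  closed_loop_constraint_satisfaction_general μ V V' c z d ρ hρ hvar e hlaw hz
end

section
/- (Recursive feasibility candidate) Suppose the terminal set Z_F is invariant under z ↦ (A+BK)z and satisfies the tightened state and input constraints with steady-state variance Ve∞. If (v_0,…,v_{N−1}, z_0,…,z_N, V_0,…,V_N) is a feasible solution of the SMPC problem at time t−1, then the shifted sequence v_k(t) = v_{k+1}(t−1), z_k(t) = z_{k+1}(t−1), V_k(t) = V_{k+1}(t−1), extended by the terminal controller (v_{N−1}(t) = K z_N(t−1), z_N(t) = (A+BK)z_N(t−1), V_N(t) = (A+BK)V_{N−1}(t)(A+BK)ᵀ + Vw), together with ξ(t) = 1, is feasible at time t. -/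
/-!
The candidate is the tail of the previous plan, continued for one step by the terminal
controller. On its first `N - 1` steps it inherits every constraint from the previous
solution. The appended step is feasible because `z_N(t-1) ∈ Z_F` and `Z_F` is invariant under
`A + BK`, and because the Lyapunov step `M ↦ (A+BK) M (A+BK)ᵀ + Vw` preserves positive
semidefiniteness and, having `Ve∞` as a fixed point, also the bound `M ⪯ Ve∞`.
-/

open MeasureTheory ProbabilityTheory Matrix

namespace Matrix.PosSemidef

variable {n R : Type*} [Fintype n] [Ring R] [PartialOrder R] [StarRing R] [TrivialStar R]

lemma mul_mul_transpose_same {m : Type*} [Finite m] {A : Matrix n n R} (hA : A.PosSemidef)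
    (B : Matrix m n R) : (B * A * Bᵀ).PosSemidef := by
  simpa only [conjTranspose_eq_transpose_of_trivial] using hA.mul_mul_conjTranspose_same B

lemma lyapunov_step [AddLeftMono R] {F V W : Matrix n n R} (hV : V.PosSemidef)
    (hW : W.PosSemidef) : (F * V * Fᵀ + W).PosSemidef :=
  (hV.mul_mul_transpose_same F).add hW

lemma sub_lyapunov_step {F V W P : Matrix n n R} (hP : F * P * Fᵀ + W = P)
    (hV : (P - V).PosSemidef) : (P - (F * V * Fᵀ + W)).PosSemidef := by
  have hdiff : P - (F * V * Fᵀ + W) = F * (P - V) * Fᵀ := by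
    conv_lhs => rw [← hP]
    rw [mul_sub, sub_mul]
    abel
  rw [hdiff]
  exact hV.mul_mul_transpose_same F

end Matrix.PosSemidef

section ShiftExtend

variable {α : Type*} {f : ℕ → α} {N : ℕ} {a : α}

def shiftExtend (f : ℕ → α) (N : ℕ) (a : α) (k : ℕ) : α :=
  if k < N then f (k + 1) else a

lemma shiftExtend_of_lt {k : ℕ} (hk : k < N) : shiftExtend f N a k = f (k + 1) :=
  if_pos hk

@[simp]
lemma shiftExtend_self : shiftExtend f N a N = a :=
  if_neg (lt_irrefl N)

lemma forall_shiftExtend {P : α → Prop} (hf : ∀ k < N, P (f (k + 1))) (ha : P a) (k : ℕ) :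
    P (shiftExtend f N a k) := by
  unfold shiftExtend
  split_ifs with hk
  exacts [hf k hk, ha]

lemma shiftExtend_succ {g : ℕ → α → α}
    (hf : ∀ k, k + 1 < N → f (k + 1 + 1) = g k (f (k + 1))) (ha : a = g (N - 1) (f N)) :
    ∀ k < N, shiftExtend f N a (k + 1) = g k (shiftExtend f N a k) := by
  intro k hk
  rw [shiftExtend_of_lt hk]
  rcases Nat.lt_or_ge (k + 1) N with hk' | hk'
  · rw [shiftExtend_of_lt hk']
    exact hf k hk'
  · obtain rfl : N = k + 1 := by omega
    rw [shiftExtend_self, ha, Nat.add_sub_cancel]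

end ShiftExtend

lemma shiftExtend_terminal_dynamics {n m : Type*} [Fintype n] [Fintype m] {A : Matrix n n ℝ}
    {B : Matrix n m ℝ} {K : Matrix m n ℝ} {N : ℕ} {v : ℕ → m → ℝ} {z : ℕ → n → ℝ}
    (hdyn : ∀ k < N, z (k + 1) = A *ᵥ z k + B *ᵥ v k) :
    ∀ k < N, shiftExtend z N ((A + B * K) *ᵥ z N) (k + 1) =
      A *ᵥ shiftExtend z N ((A + B * K) *ᵥ z N) k + B *ᵥ shiftExtend v (N - 1) (K *ᵥ z N) k := by
  refine shiftExtend_succ (g := fun k y => A *ᵥ y + B *ᵥ shiftExtend v (N - 1) (K *ᵥ z N) k)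
    (fun k hk => ?_) ?_
  · rw [shiftExtend_of_lt (by omega)]
    exact hdyn (k + 1) hk
  · rw [shiftExtend_self, add_mulVec, mulVec_mulVec]

theorem smpc_recursive_feasibility_general
    {n m : Type*} [Fintype n] [Fintype m]
    (A : Matrix n n ℝ) (B : Matrix n m ℝ) (K : Matrix m n ℝ)
    (Vw Veinf : Matrix n n ℝ) (hVw : Vw.PosSemidef)
    (N : ℕ) (hN : 0 < N)
    {ncx ncu : ℕ}
    (cx : Fin ncx → (n → ℝ)) (dx ρx : Fin ncx → ℝ)
    (cu : Fin ncu → (m → ℝ)) (du ρu : Fin ncu → ℝ)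
    (ZF : Set (n → ℝ))
    -- steady-state variance: Ve∞ = dlyap(A+BK, Vw)
    (hVeinf : (A + B * K) * Veinf * (A + B * K)ᵀ + Vw = Veinf)
    -- invariance of the terminal set under the terminal controller
    (hinv : ∀ z ∈ ZF, (A + B * K) *ᵥ z ∈ ZF)
    -- terminal set satisfies the tightened constraints with variances bounded by Ve∞
    (hZFx : ∀ z ∈ ZF, ∀ V : Matrix n n ℝ, V.PosSemidef → (Veinf - V).PosSemidef →
      ∀ i, cx i ⬝ᵥ z ≤ dx i - Real.sqrt (cx i ⬝ᵥ V *ᵥ cx i) * stdNormalCDFInv (ρx i))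
    (hZFu : ∀ z ∈ ZF, ∀ V : Matrix n n ℝ, V.PosSemidef → (Veinf - V).PosSemidef →
      ∀ j, cu j ⬝ᵥ (K *ᵥ z) ≤ du j
        - Real.sqrt (cu j ⬝ᵥ (K * V * Kᵀ) *ᵥ cu j) * stdNormalCDFInv (ρu j))
    -- feasible solution at time t−1 (with measurement xprev and previous
    -- interpolation data zinterp, Vinterp), and new measurement x at time t
    (x : n → ℝ)
    (v : ℕ → m → ℝ) (z : ℕ → n → ℝ) (V : ℕ → Matrix n n ℝ)
    (hdyn : ∀ k < N, z (k + 1) = A *ᵥ z k + B *ᵥ v k)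
    (hVdyn : ∀ k < N, V (k + 1) = (A + B * K) * V k * (A + B * K)ᵀ + Vw)
    (hVpsd : ∀ k ≤ N, (V k).PosSemidef)
    (hccx : ∀ k < N, ∀ i, cx i ⬝ᵥ z k
      ≤ dx i - Real.sqrt (cx i ⬝ᵥ (V k) *ᵥ cx i) * stdNormalCDFInv (ρx i))
    (hccu : ∀ k < N, ∀ j, cu j ⬝ᵥ v k
      ≤ du j - Real.sqrt (cu j ⬝ᵥ (K * V k * Kᵀ) *ᵥ cu j) * stdNormalCDFInv (ρu j))
    (hterm : z N ∈ ZF)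
    (hVbound : ∀ k ≤ N, (Veinf - V k).PosSemidef) :
    ∃ (v' : ℕ → m → ℝ) (z' : ℕ → n → ℝ) (V' : ℕ → Matrix n n ℝ) (ξ' : ℝ),
      -- the candidate is the shifted previous solution with the terminal controller
      (∀ k < N - 1, v' k = v (k + 1)) ∧ v' (N - 1) = K *ᵥ z N ∧
      (∀ k < N, z' k = z (k + 1)) ∧ z' N = (A + B * K) *ᵥ z N ∧
      (∀ k < N, V' k = V (k + 1)) ∧
      V' N = (A + B * K) * V' (N - 1) * (A + B * K)ᵀ + Vw ∧
      ξ' = 1 ∧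
      -- and it is feasible at time t:
      (∀ k < N, z' (k + 1) = A *ᵥ z' k + B *ᵥ v' k) ∧
      (∀ k < N, V' (k + 1) = (A + B * K) * V' k * (A + B * K)ᵀ + Vw) ∧
      z' 0 = (1 - ξ') • x + ξ' • z 1 ∧
      V' 0 = ξ' ^ 2 • V 1 ∧
      (∀ k ≤ N, (V' k).PosSemidef) ∧
      (∀ k < N, ∀ i, cx i ⬝ᵥ z' k
        ≤ dx i - Real.sqrt (cx i ⬝ᵥ (V' k) *ᵥ cx i) * stdNormalCDFInv (ρx i)) ∧
      (∀ k < N, ∀ j, cu j ⬝ᵥ v' k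
        ≤ du j - Real.sqrt (cu j ⬝ᵥ (K * V' k * Kᵀ) *ᵥ cu j) * stdNormalCDFInv (ρu j)) ∧
      z' N ∈ ZF ∧ ξ' ∈ Set.Icc (0 : ℝ) 1 ∧
      (∀ k ≤ N, (Veinf - V' k).PosSemidef) := by
  have hVN := hVpsd N le_rfl
  have hVNbound := hVbound N le_rfl
  have hN' : N - 1 + 1 = N := Nat.sub_one_add_one_eq_of_pos hN
  refine ⟨shiftExtend v (N - 1) (K *ᵥ z N), shiftExtend z N ((A + B * K) *ᵥ z N),
    shiftExtend V N ((A + B * K) * V N * (A + B * K)ᵀ + Vw), 1,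
    fun k hk => shiftExtend_of_lt hk, shiftExtend_self, fun k hk => shiftExtend_of_lt hk,
    shiftExtend_self, fun k hk => shiftExtend_of_lt hk, ?_, rfl,
    shiftExtend_terminal_dynamics hdyn,
    shiftExtend_succ (g := fun _ M => (A + B * K) * M * (A + B * K)ᵀ + Vw)
      (fun k hk => hVdyn (k + 1) hk) rfl,
    by simp [shiftExtend_of_lt hN], by simp [shiftExtend_of_lt hN],
    fun k _ => forall_shiftExtend (fun k hk => hVpsd (k + 1) hk) (hVN.lyapunov_step hVw) k,
    fun k hk => ?_, fun k hk => ?_, by simpa using hinv _ hterm, ⟨zero_le_one, le_rfl⟩,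
    fun k _ => forall_shiftExtend (P := fun M => (Veinf - M).PosSemidef)
      (fun k hk => hVbound (k + 1) hk) (hVNbound.sub_lyapunov_step hVeinf) k⟩
  · rw [shiftExtend_self, shiftExtend_of_lt (by omega), hN']
  · rw [shiftExtend_of_lt hk, shiftExtend_of_lt hk]
    rcases Nat.lt_or_ge (k + 1) N with hk' | hk'
    · exact hccx _ hk'
    · obtain rfl : N = k + 1 := by omega
      exact hZFx _ hterm _ hVN hVNbound
  · rw [shiftExtend_of_lt hk]
    rcases Nat.lt_or_ge k (N - 1) with hk' | hk'
    · rw [shiftExtend_of_lt hk']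
      exact hccu _ (by omega)
    · obtain rfl : k = N - 1 := by omega
      rw [hN', shiftExtend_self]
      exact hZFu _ hterm _ hVN hVNbound

/-- Theorem 1 (recursive feasibility).  If the terminal set `Z_F` is invariant under
the terminal controller `z ↦ (A+BK)z` and satisfies the tightened state and input
constraints for every variance bounded by the steady-state variance `Ve∞`, and if
`(v, z, V, ξ)` is a feasible solution of the SMPC problem at time `t−1`, then the
shifted sequence, extended by the terminal controller and with interpolation
variable `ξ' = 1`, is feasible at time `t` (for any new measurement `x`). -/
theorem smpc_recursive_feasibility
    {n m : Type*} [Fintype n] [Fintype m]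
    (A : Matrix n n ℝ) (B : Matrix n m ℝ) (K : Matrix m n ℝ)
    (Vw Veinf : Matrix n n ℝ) (hVw : Vw.PosSemidef)
    (N : ℕ) (hN : 0 < N)
    {ncx ncu : ℕ}
    (cx : Fin ncx → (n → ℝ)) (dx ρx : Fin ncx → ℝ)
    (cu : Fin ncu → (m → ℝ)) (du ρu : Fin ncu → ℝ)
    (ZF : Set (n → ℝ))
    -- steady-state variance: Ve∞ = dlyap(A+BK, Vw)
    (hVeinf : (A + B * K) * Veinf * (A + B * K)ᵀ + Vw = Veinf)
    -- invariance of the terminal set under the terminal controller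
    (hinv : ∀ z ∈ ZF, (A + B * K) *ᵥ z ∈ ZF)
    -- terminal set satisfies the tightened constraints with variances bounded by Ve∞
    (hZFx : ∀ z ∈ ZF, ∀ V : Matrix n n ℝ, V.PosSemidef → (Veinf - V).PosSemidef →
      ∀ i, cx i ⬝ᵥ z ≤ dx i - Real.sqrt (cx i ⬝ᵥ V *ᵥ cx i) * stdNormalCDFInv (ρx i))
    (hZFu : ∀ z ∈ ZF, ∀ V : Matrix n n ℝ, V.PosSemidef → (Veinf - V).PosSemidef →
      ∀ j, cu j ⬝ᵥ (K *ᵥ z) ≤ du j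
        - Real.sqrt (cu j ⬝ᵥ (K * V * Kᵀ) *ᵥ cu j) * stdNormalCDFInv (ρu j))
    -- feasible solution at time t−1 (with measurement xprev and previous
    -- interpolation data zinterp, Vinterp), and new measurement x at time t
    (xprev x zinterp : n → ℝ) (Vinterp : Matrix n n ℝ)
    (v : ℕ → m → ℝ) (z : ℕ → n → ℝ) (V : ℕ → Matrix n n ℝ) (ξ : ℝ)
    (hdyn : ∀ k < N, z (k + 1) = A *ᵥ z k + B *ᵥ v k)
    (hVdyn : ∀ k < N, V (k + 1) = (A + B * K) * V k * (A + B * K)ᵀ + Vw)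
    (hinit : z 0 = (1 - ξ) • xprev + ξ • zinterp)
    (hVinit : V 0 = ξ ^ 2 • Vinterp)
    (hVpsd : ∀ k ≤ N, (V k).PosSemidef)
    (hccx : ∀ k < N, ∀ i, cx i ⬝ᵥ z k
      ≤ dx i - Real.sqrt (cx i ⬝ᵥ (V k) *ᵥ cx i) * stdNormalCDFInv (ρx i))
    (hccu : ∀ k < N, ∀ j, cu j ⬝ᵥ v k
      ≤ du j - Real.sqrt (cu j ⬝ᵥ (K * V k * Kᵀ) *ᵥ cu j) * stdNormalCDFInv (ρu j))
    (hterm : z N ∈ ZF)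
    (hξ : ξ ∈ Set.Icc (0 : ℝ) 1)
    (hVbound : ∀ k ≤ N, (Veinf - V k).PosSemidef) :
    ∃ (v' : ℕ → m → ℝ) (z' : ℕ → n → ℝ) (V' : ℕ → Matrix n n ℝ) (ξ' : ℝ),
      -- the candidate is the shifted previous solution with the terminal controller
      (∀ k < N - 1, v' k = v (k + 1)) ∧ v' (N - 1) = K *ᵥ z N ∧
      (∀ k < N, z' k = z (k + 1)) ∧ z' N = (A + B * K) *ᵥ z N ∧
      (∀ k < N, V' k = V (k + 1)) ∧
      V' N = (A + B * K) * V' (N - 1) * (A + B * K)ᵀ + Vw ∧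
      ξ' = 1 ∧
      -- and it is feasible at time t:
      (∀ k < N, z' (k + 1) = A *ᵥ z' k + B *ᵥ v' k) ∧
      (∀ k < N, V' (k + 1) = (A + B * K) * V' k * (A + B * K)ᵀ + Vw) ∧
      z' 0 = (1 - ξ') • x + ξ' • z 1 ∧
      V' 0 = ξ' ^ 2 • V 1 ∧
      (∀ k ≤ N, (V' k).PosSemidef) ∧
      (∀ k < N, ∀ i, cx i ⬝ᵥ z' k
        ≤ dx i - Real.sqrt (cx i ⬝ᵥ (V' k) *ᵥ cx i) * stdNormalCDFInv (ρx i)) ∧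
      (∀ k < N, ∀ j, cu j ⬝ᵥ v' k
        ≤ du j - Real.sqrt (cu j ⬝ᵥ (K * V' k * Kᵀ) *ᵥ cu j) * stdNormalCDFInv (ρu j)) ∧
      z' N ∈ ZF ∧ ξ' ∈ Set.Icc (0 : ℝ) 1 ∧
      (∀ k ≤ N, (Veinf - V' k).PosSemidef) :=
  smpc_recursive_feasibility_general A B K Vw Veinf hVw N hN cx dx ρx cu du ρu ZF hVeinf hinv hZFx
    hZFu x v z V hdyn hVdyn hVpsd hccx hccu hterm hVbound
end
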